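/- Let p ≥ 2 and let H be a spanning r-regular subgraph of the complete bipartite graph K_{p,p}. Let μ_3, …, μ_{2p} be the Laplacian eigenvalues of H remaining after removing one copy of 0 and one copy of 2r (0 is a Laplacian eigenvalue of H with the all-ones eigenvector, and 2r is a Laplacian eigenvalue of H with eigenvector (𝟙_p, −𝟙_p) since H is bipartite r-regular). Then the characteristic polynomial of the Laplacian of [S(K_{p,p})]^{H}, namely of the block matrix [[L(H) + p·I_{2p}, −B(K_{p,p})],[−B(K_{p,p})ᵀ, 2·I_{p²}]], equals x·(x − (p+2))·(x − (p+2r))·(x − 2)^{p²−2p+1} · ∏_{i=3}^{2p} ( x² − (p + μ_i + 2)x + 2μ_i + p ). -/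

import Mathlib

open Matrix SimpleGraph

/-- The vertex–edge incidence matrix of a graph, relative to an enumeration
`e` of its edges. -/
noncomputable def incMat {V : Type} [Fintype V] [DecidableEq V] {m : ℕ}
    (G : SimpleGraph V) [Fintype G.edgeSet] (e : Fin m ≃ G.edgeFinset) :
    Matrix V (Fin m) ℝ :=
  Matrix.of fun i j => if i ∈ (e j : Sym2 V) then (1 : ℝ) else 0

instance (p q : ℕ) : DecidableRel (completeBipartiteGraph (Fin p) (Fin q)).Adj := by
  intro a b; unfold completeBipartiteGraph; dsimp; infer_instance

/-! For `x ≠ 2` the block `(x - 2) • 1` is invertible, and its Schur complement gives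
`det = (x - 2) ^ (p² - 2p) * det ((x - 2) (x - p - L(H)) - B Bᵀ)` with `B Bᵀ = p + A(K_{p,p})`.
The orthonormal Laplacian eigenvectors `v i` of `H` are also eigenvectors of `A(K_{p,p})`,
with eigenvalue `a i = p` on `v 0`, `-p` on `v 1`, and `0` on the others: these are orthogonal
to both `v 0` and `v 1`, hence have zero sum on each side. So the determinant is
`∏ ((x - 2) (x - p - μ i) - p - a i)`, which factors as claimed. Both sides are continuous in
`x`, so the identity extends to `x = 2`. -/

namespace Matrix

theorem smul_one_sub_fromBlocks {R m n : Type*} [Ring R] [DecidableEq m] [DecidableEq n]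
    (y c : R) (A : Matrix m m R) (B : Matrix m n R) (C : Matrix n m R) :
    y • (1 : Matrix (m ⊕ n) (m ⊕ n) R) - fromBlocks A (-B) (-C) (c • 1) =
      fromBlocks (y • 1 - A) B C ((y - c) • 1) := by
  ext (i | i) (j | j) <;> simp [one_apply, apply_ite₂ (· - ·)]

theorem det_fromBlocks_smul_one {K m n : Type*} [Field K] [Fintype m] [DecidableEq m] [Fintype n]
    [DecidableEq n] {t : K} (ht : t ≠ 0) (hcard : Fintype.card m ≤ Fintype.card n)
    (X : Matrix m m K) (B : Matrix m n K) (C : Matrix n m K) :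
    (fromBlocks X B C (t • 1)).det =
      t ^ (Fintype.card n - Fintype.card m) * (t • X - B * C).det := by
  let _ : Invertible (t • 1 : Matrix n n K) := invertibleOfLeftInverse _ (t⁻¹ • 1) (by
    rw [smul_mul_smul, Matrix.one_mul, inv_mul_cancel₀ ht, one_smul])
  have hschur : t • X - B * C = t • (X - B * ⅟(t • (1 : Matrix n n K)) * C) := by
    rw [show ⅟(t • (1 : Matrix n n K)) = t⁻¹ • 1 from rfl, Matrix.mul_smul, Matrix.mul_one,
      Matrix.smul_mul, smul_sub, smul_smul, mul_inv_cancel₀ ht, one_smul]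
  rw [det_fromBlocks₂₂, hschur, det_smul, det_smul, det_one, mul_one, ← mul_assoc, ← pow_add,
    Nat.sub_add_cancel hcard]

theorem det_eq_prod_of_orthonormal_eigenvectors {R n ι : Type*} [CommRing R] [Fintype n]
    [DecidableEq n] [Fintype ι] [DecidableEq ι]
    (M : Matrix n n R) (v : ι → n → R) (d : ι → R) (hcard : Fintype.card ι = Fintype.card n)
    (hortho : ∀ i j, v i ⬝ᵥ v j = if i = j then 1 else 0)
    (heig : ∀ i, M *ᵥ v i = d i • v i) :
    M.det = ∏ i, d i := by
  let φ : n ≃ ι := Fintype.equivOfCardEq hcard.symm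
  let P : Matrix n n R := of fun u k => v (φ k) u
  have hPP : Pᵀ * P = 1 := by
    ext k l
    simpa [P, mul_apply, one_apply, φ.injective.eq_iff, dotProduct] using hortho (φ k) (φ l)
  have hMP : M * P = P * diagonal (d ∘ φ) := by
    ext u k
    rw [mul_diagonal]
    simpa [P, mul_apply, mulVec, dotProduct, mul_comm] using congrFun (heig (φ k)) u
  have hdiag : Pᵀ * M * P = diagonal (d ∘ φ) := by
    rw [Matrix.mul_assoc, hMP, ← Matrix.mul_assoc, hPP, Matrix.one_mul]
  calc M.det = Pᵀ.det * P.det * M.det := by rw [← det_mul, hPP, det_one, one_mul]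
    _ = (Pᵀ * M * P).det := by rw [det_mul, det_mul]; ring
    _ = ∏ i, d i := by rw [hdiag, det_diagonal]; exact φ.prod_comp d

end Matrix

namespace SimpleGraph

theorem IsRegularOfDegree.incMatrix_mul_transpose {V R : Type*} [Fintype V] [DecidableEq V]
    [Semiring R] {G : SimpleGraph V} [DecidableRel G.Adj] {d : ℕ} (hG : G.IsRegularOfDegree d) :
    G.incMatrix R * (G.incMatrix R)ᵀ = (d : R) • 1 + G.adjMatrix R := by
  rw [SimpleGraph.incMatrix_mul_transpose]
  ext a b
  by_cases hab : a = b
  · subst hab; simp [hG.degree_eq]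
  · simp [hab, one_apply]

theorem completeBipartiteGraph_isRegularOfDegree (V : Type*) [Fintype V]
    [DecidableRel (completeBipartiteGraph V V).Adj] :
    (completeBipartiteGraph V V).IsRegularOfDegree (Fintype.card V) := by
  intro u
  rw [← card_neighborFinset_eq_degree]
  rcases u with a | b
  · rw [show (completeBipartiteGraph V V).neighborFinset (.inl a) = Finset.univ.map .inr by
      ext (w | w) <;> simp]
    simp
  · rw [show (completeBipartiteGraph V V).neighborFinset (.inr b) = Finset.univ.map .inl by
      ext (w | w) <;> simp]
    simp

theorem completeBipartiteGraph_adjMatrix_mulVec {V W R : Type*} [Fintype V] [Fintype W]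
    [NonAssocSemiring R] [DecidableRel (completeBipartiteGraph V W).Adj] (f : V ⊕ W → R) :
    (completeBipartiteGraph V W).adjMatrix R *ᵥ f =
      Sum.elim (fun _ => ∑ w, f (.inr w)) (fun _ => ∑ v, f (.inl v)) := by
  ext (a | b) <;> simp [mulVec, dotProduct, Fintype.sum_sum_type, adjMatrix_apply]

theorem completeBipartiteGraph_adjMatrix_mulVec_of_orthogonal {V ι : Type*} [Fintype V]
    [DecidableRel (completeBipartiteGraph V V).Adj] [DecidableEq ι] (v : ι → V ⊕ V → ℝ)
    {i₀ i₁ : ι} (h01 : i₀ ≠ i₁) {c : ℝ} (hc : c ≠ 0)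
    (hortho : ∀ i j, i ≠ j → v i ⬝ᵥ v j = 0) (hv₀ : v i₀ = fun _ => c)
    (hv₁ : v i₁ = Sum.elim (fun _ => c) (fun _ => -c)) (i : ι) :
    (completeBipartiteGraph V V).adjMatrix ℝ *ᵥ v i =
      (if i = i₀ then (Fintype.card V : ℝ) else if i = i₁ then -(Fintype.card V : ℝ) else 0)
        • v i := by
  rw [completeBipartiteGraph_adjMatrix_mulVec]
  split_ifs with h₀ h₁
  · subst h₀
    ext (a | b) <;> simp [hv₀, mul_comm]
  · subst h₁
    ext (a | b) <;> simp [hv₁, mul_comm]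
  · have hsum := hortho i i₀ h₀
    have hdiff := hortho i i₁ h₁
    simp only [hv₀, hv₁, dotProduct, Fintype.sum_sum_type, Sum.elim_inl, Sum.elim_inr,
      ← Finset.sum_mul, mul_neg, Finset.sum_neg_distrib, ← sub_eq_add_neg, ← sub_mul,
      mul_eq_zero, hc, or_false] at hsum hdiff
    have hl : ∑ a, v i (.inl a) = 0 := by linarith
    have hr : ∑ b, v i (.inr b) = 0 := by linarith
    ext (a | b) <;> simp [hl, hr]

end SimpleGraph

theorem incMat_mul_transpose {V : Type} [Fintype V] [DecidableEq V] {m : ℕ}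
    (G : SimpleGraph V) [DecidableRel G.Adj] (e : Fin m ≃ G.edgeFinset) :
    incMat G e * (incMat G e)ᵀ = G.incMatrix ℝ * (G.incMatrix ℝ)ᵀ := by
  have hcol : ∀ (a : V) (j : Fin m), incMat G e a j = G.incMatrix ℝ a (e j) := by
    intro a j
    have he : ((e j : G.edgeFinset) : Sym2 V) ∈ G.edgeSet := mem_edgeFinset.1 (e j).2
    by_cases h : a ∈ ((e j : G.edgeFinset) : Sym2 V) <;>
      simp [incMat, incMatrix_apply', incidenceSet, h, he]
  ext a b
  simp only [mul_apply, transpose_apply, hcol]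
  rw [e.sum_comp (fun s : G.edgeFinset => G.incMatrix ℝ a s * G.incMatrix ℝ b s),
    Finset.sum_coe_sort G.edgeFinset (fun s => G.incMatrix ℝ a s * G.incMatrix ℝ b s)]
  refine Finset.sum_subset (Finset.subset_univ _) fun s _ hs => ?_
  rw [G.incMatrix_of_notMem_incidenceSet fun h => hs (mem_edgeFinset.2 h.1), zero_mul]

theorem det_sub_mergedSubdivisionLapMatrix_of_ne_two {p r : ℕ} (hp : 2 ≤ p)
    {H : SimpleGraph (Fin p ⊕ Fin p)} [DecidableRel H.Adj]
    (e : Fin (p * p) ≃ (completeBipartiteGraph (Fin p) (Fin p)).edgeFinset)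
    {ι : Type*} [Fintype ι] [DecidableEq ι] (hι : Fintype.card ι = 2 * p)
    {v : ι → Fin p ⊕ Fin p → ℝ} {μ : ι → ℝ}
    (hortho : ∀ i j, v i ⬝ᵥ v j = if i = j then 1 else 0)
    (heig : ∀ i, H.lapMatrix ℝ *ᵥ v i = μ i • v i)
    {i₀ i₁ : ι} (h01 : i₀ ≠ i₁) {c : ℝ} (hc : c ≠ 0) (hv₀ : v i₀ = fun _ => c)
    (hv₁ : v i₁ = Sum.elim (fun _ => c) (fun _ => -c)) (hμ₀ : μ i₀ = 0) (hμ₁ : μ i₁ = 2 * r)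
    {y : ℝ} (hy : y ≠ 2) :
    (y • (1 : Matrix ((Fin p ⊕ Fin p) ⊕ Fin (p * p)) ((Fin p ⊕ Fin p) ⊕ Fin (p * p)) ℝ) -
        fromBlocks (H.lapMatrix ℝ + (p : ℝ) • 1)
          (-(incMat (completeBipartiteGraph (Fin p) (Fin p)) e))
          (-(incMat (completeBipartiteGraph (Fin p) (Fin p)) e)ᵀ)
          ((2 : ℝ) • (1 : Matrix (Fin (p * p)) (Fin (p * p)) ℝ))).det
      = y * (y - ((p : ℝ) + 2)) * (y - ((p : ℝ) + 2 * (r : ℝ))) *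
          (y - 2) ^ (p * p - 2 * p + 1) *
          ∏ i ∈ (Finset.univ.erase i₀).erase i₁,
            (y ^ 2 - ((p : ℝ) + μ i + 2) * y + 2 * μ i + (p : ℝ)) := by
  set K := completeBipartiteGraph (Fin p) (Fin p)
  set a : ι → ℝ := fun i => if i = i₀ then (p : ℝ) else if i = i₁ then -(p : ℝ) else 0
  have hA : ∀ i, K.adjMatrix ℝ *ᵥ v i = a i • v i := by
    simpa [a] using completeBipartiteGraph_adjMatrix_mulVec_of_orthogonal v h01 hc
      (fun i j hij => by simpa [hij] using hortho i j) hv₀ hv₁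
  have hBBt : incMat K e * (incMat K e)ᵀ = (p : ℝ) • 1 + K.adjMatrix ℝ := by
    rw [incMat_mul_transpose,
      (completeBipartiteGraph_isRegularOfDegree (Fin p)).incMatrix_mul_transpose, Fintype.card_fin]
  set q : ι → ℝ := fun i => (y - 2) * (y - p - μ i) - (p + a i)
  have hdet : ((y - 2) • (y • 1 - (H.lapMatrix ℝ + (p : ℝ) • 1)) -
      ((p : ℝ) • 1 + K.adjMatrix ℝ)).det = ∏ i, q i := by
    refine det_eq_prod_of_orthonormal_eigenvectors _ v q (by simp [hι]; omega) hortho fun i => ?_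
    simp only [sub_mulVec, add_mulVec, smul_mulVec, one_mulVec, heig, hA, q]
    module
  rw [smul_one_sub_fromBlocks, det_fromBlocks_smul_one (sub_ne_zero.2 hy) (by simp; nlinarith),
    hBBt, hdet]
  have hq₀ : q i₀ = y * (y - (p + 2)) := by simp only [q, a, if_pos, hμ₀]; ring
  have hq₁ : q i₁ = (y - 2) * (y - (p + 2 * r)) := by
    simp only [q, a, if_neg h01.symm, if_pos, hμ₁]; ring
  have hq : ∀ i ∈ (Finset.univ.erase i₀).erase i₁,
      q i = y ^ 2 - ((p : ℝ) + μ i + 2) * y + 2 * μ i + p := by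
    intro i hi
    obtain ⟨hi₁, hi₀⟩ : i ≠ i₁ ∧ i ≠ i₀ := by simp_all
    simp only [q, a, if_neg hi₀, if_neg hi₁]; ring
  rw [← Finset.mul_prod_erase _ _ (Finset.mem_univ i₀),
    ← Finset.mul_prod_erase _ _ (Finset.mem_erase.2 ⟨h01.symm, Finset.mem_univ i₁⟩),
    hq₀, hq₁, Finset.prod_congr rfl hq]
  rw [Fintype.card_fin, Fintype.card_sum, Fintype.card_fin, ← two_mul, pow_succ]
  ring

/-- `L`-characteristic polynomial of $[S(K_{p,p})]^{H}$. -/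
theorem stmt_6 (p r : ℕ) (hp : 2 ≤ p)
    (H : SimpleGraph (Fin p ⊕ Fin p)) [DecidableRel H.Adj]
    (e : Fin (p * p) ≃ (completeBipartiteGraph (Fin p) (Fin p)).edgeFinset)
    (v : Fin (2 * p) → (Fin p ⊕ Fin p) → ℝ) (μ : Fin (2 * p) → ℝ)
    (hortho : ∀ i j, v i ⬝ᵥ v j = if i = j then 1 else 0)
    (heig : ∀ i, (H.lapMatrix ℝ).mulVec (v i) = μ i • v i)
    (hv0 : ∀ u, v ⟨0, by omega⟩ u = 1 / Real.sqrt (2 * p))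
    (hv1 : v ⟨1, by omega⟩ =
      Sum.elim (fun _ => 1 / Real.sqrt (2 * p)) (fun _ => -(1 / Real.sqrt (2 * p))))
    (hμ0 : μ ⟨0, by omega⟩ = 0) (hμ1 : μ ⟨1, by omega⟩ = 2 * r)
    (x : ℝ) :
    (x • (1 : Matrix ((Fin p ⊕ Fin p) ⊕ Fin (p * p)) ((Fin p ⊕ Fin p) ⊕ Fin (p * p)) ℝ) -
        Matrix.fromBlocks (H.lapMatrix ℝ + (p : ℝ) • 1)
          (-(incMat (completeBipartiteGraph (Fin p) (Fin p)) e))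
          (-(incMat (completeBipartiteGraph (Fin p) (Fin p)) e)ᵀ)
          ((2 : ℝ) • (1 : Matrix (Fin (p * p)) (Fin (p * p)) ℝ))).det
      = x * (x - ((p : ℝ) + 2)) * (x - ((p : ℝ) + 2 * (r : ℝ))) *
          (x - 2) ^ (p * p - 2 * p + 1) *
          ∏ i ∈ (Finset.univ.erase (⟨0, by omega⟩ : Fin (2 * p))).erase ⟨1, by omega⟩,
            (x ^ 2 - ((p : ℝ) + μ i + 2) * x + 2 * μ i + (p : ℝ)) := by
  have hc : 1 / Real.sqrt (2 * p) ≠ 0 := by positivity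
  refine congrFun (Continuous.ext_on (dense_compl_singleton 2) ?_ ?_ fun y hy =>
    det_sub_mergedSubdivisionLapMatrix_of_ne_two hp e (Fintype.card_fin _) hortho heig
      (by simp [Fin.ext_iff]) hc (funext hv0) hv1 hμ0 hμ1 hy) x
  all_goals fun_prop
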